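/- Every transitive dynamical system is either almost mean equicontinuous (has a mean equicontinuous point) or mean sensitive, and these alternatives are mutually exclusive. -/

import Mathlib

/-!
Write `D(x, y)` for the upper mean distance `limsup (1/n) ∑_{i<n} d(Tⁱx, Tⁱy)`. On a bounded space
`D` is a pseudometric, and `D(x, y) ≤ D(Tᵏx, Tᵏy)`, since the first `k` terms of the sum disappear
in the average. A mean sensitive system has no mean equicontinuous point, directly from the
definitions. If the system is not mean sensitive, then for every `ε` some open set `U` lies within
`D`-distance `ε` of one of its points `x`. The orbit of a transitive point `z` enters `U` at some time
`k`, and by continuity of `Tᵏ` so does the orbit of every `y` near `z`; hence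
`D(z, y) ≤ D(Tᵏz, Tᵏy) ≤ D(Tᵏz, x) + D(x, Tᵏy) ≤ 2ε`, and `z` is mean equicontinuous.
-/

open Filter Topology MeasureTheory
open scoped Classical

noncomputable def avgDist {Z : Type*} [MetricSpace Z] (R : Z → Z) (x y : Z) (n : ℕ) : ℝ :=
  (n : ℝ)⁻¹ * ∑ i ∈ Finset.range n, dist (R^[i] x) (R^[i] y)

def MeanEquicontinuous {Z : Type*} [MetricSpace Z] (R : Z → Z) : Prop :=
  ∀ ε > 0, ∃ δ > 0, ∀ x y : Z, dist x y < δ →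
    Filter.limsup (avgDist R x y) Filter.atTop < ε

def MeanEqPtAt {Z : Type*} [MetricSpace Z] (R : Z → Z) (x : Z) : Prop :=
  ∀ ε > 0, ∃ δ > 0, ∀ y : Z, dist x y < δ →
    Filter.limsup (avgDist R x y) Filter.atTop < ε

def MeanSensitive {Z : Type*} [MetricSpace Z] (R : Z → Z) : Prop :=
  ∃ δ > 0, ∀ x : Z, ∀ ε > 0, ∃ y : Z, dist x y < ε ∧
    δ < Filter.limsup (avgDist R x y) Filter.atTop

open Set Metric

section MeanDist

variable {Z : Type*} [MetricSpace Z] (R : Z → Z)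

noncomputable def meanDist (x y : Z) : ℝ :=
  limsup (avgDist R x y) atTop

lemma avgDist_nonneg (x y : Z) (n : ℕ) : 0 ≤ avgDist R x y n := by
  unfold avgDist
  positivity

lemma avgDist_comm (x y : Z) : avgDist R x y = avgDist R y x := by
  funext n
  simp only [avgDist, dist_comm]

lemma avgDist_triangle (x y z : Z) (n : ℕ) :
    avgDist R x z n ≤ avgDist R x y n + avgDist R y z n := by
  simp only [avgDist, ← mul_add, ← Finset.sum_add_distrib]
  gcongr
  exact dist_triangle _ _ _

lemma sum_dist_iterate_le_diam [BoundedSpace Z] (x y : Z) (n : ℕ) :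
    ∑ i ∈ Finset.range n, dist (R^[i] x) (R^[i] y) ≤ n * diam (univ : Set Z) := by
  simpa using Finset.sum_le_sum fun i (_ : i ∈ Finset.range n) =>
    dist_le_diam_of_mem (Bornology.isBounded_univ.2 ‹_›) (mem_univ (R^[i] x)) (mem_univ (R^[i] y))

lemma avgDist_le_diam [BoundedSpace Z] (x y : Z) (n : ℕ) :
    avgDist R x y n ≤ diam (univ : Set Z) := by
  rcases n.eq_zero_or_pos with rfl | hn
  · simpa [avgDist] using diam_nonneg
  · rw [avgDist, inv_mul_le_iff₀ (by positivity)]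
    exact sum_dist_iterate_le_diam R x y n

lemma avgDist_le_avgDist_iterate [BoundedSpace Z] (x y : Z) (k n : ℕ) :
    avgDist R x y n ≤ k * diam (univ : Set Z) / n + avgDist R (R^[k] x) (R^[k] y) n := by
  have hsum : ∑ i ∈ Finset.range n, dist (R^[i] x) (R^[i] y) ≤
      k * diam (univ : Set Z) + ∑ i ∈ Finset.range n, dist (R^[i] (R^[k] x)) (R^[i] (R^[k] y)) :=
    calc ∑ i ∈ Finset.range n, dist (R^[i] x) (R^[i] y)
        ≤ ∑ i ∈ Finset.range (k + n), dist (R^[i] x) (R^[i] y) :=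
          Finset.sum_le_sum_of_subset_of_nonneg (by simp) fun _ _ _ => dist_nonneg
      _ = ∑ i ∈ Finset.range k, dist (R^[i] x) (R^[i] y) +
            ∑ i ∈ Finset.range n, dist (R^[i] (R^[k] x)) (R^[i] (R^[k] y)) := by
          rw [Finset.sum_range_add]
          simp only [add_comm k, Function.iterate_add_apply]
      _ ≤ _ := by grw [sum_dist_iterate_le_diam]
  simp only [avgDist]
  grw [hsum]
  rw [mul_add, inv_mul_eq_div]

lemma isBoundedUnder_ge_avgDist (x y : Z) : IsBoundedUnder (· ≥ ·) atTop (avgDist R x y) :=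
  isBoundedUnder_of ⟨0, avgDist_nonneg R x y⟩

lemma isCoboundedUnder_le_avgDist (x y : Z) : IsCoboundedUnder (· ≤ ·) atTop (avgDist R x y) :=
  (isBoundedUnder_ge_avgDist R x y).isCoboundedUnder_le

lemma meanDist_comm (x y : Z) : meanDist R x y = meanDist R y x := by
  rw [meanDist, avgDist_comm, meanDist]

variable [BoundedSpace Z]

lemma isBoundedUnder_le_avgDist (x y : Z) : IsBoundedUnder (· ≤ ·) atTop (avgDist R x y) :=
  isBoundedUnder_of ⟨_, avgDist_le_diam R x y⟩

lemma meanDist_triangle (x y z : Z) : meanDist R x z ≤ meanDist R x y + meanDist R y z :=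
  calc meanDist R x z ≤ limsup (avgDist R x y + avgDist R y z) atTop :=
        limsup_le_limsup (.of_forall (avgDist_triangle R x y z)) (isCoboundedUnder_le_avgDist R x z)
          (isBoundedUnder_le_add (isBoundedUnder_le_avgDist R x y) (isBoundedUnder_le_avgDist R y z))
    _ ≤ meanDist R x y + meanDist R y z :=
        limsup_add_le (isBoundedUnder_ge_avgDist R x y) (isBoundedUnder_le_avgDist R x y)
          (isCoboundedUnder_le_avgDist R y z) (isBoundedUnder_le_avgDist R y z)

lemma meanDist_le_meanDist_iterate (x y : Z) (k : ℕ) :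
    meanDist R x y ≤ meanDist R (R^[k] x) (R^[k] y) := by
  set c : ℕ → ℝ := fun n => k * diam (univ : Set Z) / n
  have hc : Tendsto c atTop (𝓝 0) := tendsto_const_div_atTop_nhds_zero_nat _
  calc meanDist R x y ≤ limsup (c + avgDist R (R^[k] x) (R^[k] y)) atTop :=
        limsup_le_limsup (.of_forall (avgDist_le_avgDist_iterate R x y k))
          (isCoboundedUnder_le_avgDist R x y)
          (isBoundedUnder_le_add hc.isBoundedUnder_le (isBoundedUnder_le_avgDist R _ _))
    _ ≤ limsup c atTop + meanDist R (R^[k] x) (R^[k] y) :=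
        limsup_add_le hc.isBoundedUnder_ge hc.isBoundedUnder_le
          (isCoboundedUnder_le_avgDist R _ _) (isBoundedUnder_le_avgDist R _ _)
    _ = meanDist R (R^[k] x) (R^[k] y) := by rw [hc.limsup_eq, zero_add]

end MeanDist

section Dichotomy

variable {Z : Type*} [MetricSpace Z] (R : Z → Z)

lemma not_meanEqPtAt_of_meanSensitive {δ : ℝ} (hδ : 0 < δ)
    (hsens : ∀ x : Z, ∀ U ∈ 𝓝 x, ∃ y ∈ U, δ < meanDist R x y) (x : Z) : ¬MeanEqPtAt R x := by
  intro hx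
  obtain ⟨η, hη, hηx⟩ := hx δ hδ
  obtain ⟨y, hy, hδy⟩ := hsens x (ball x η) (ball_mem_nhds x hη)
  exact (hηx y (mem_ball'.1 hy)).not_gt hδy

lemma meanEqPtAt_of_dense_orbit [BoundedSpace Z] (hR : Continuous R) {z : Z}
    (hz : Dense (range fun n : ℕ => R^[n] z))
    (hins : ∀ ε > 0, ∃ x : Z, ∃ U ∈ 𝓝 x, ∀ y ∈ U, meanDist R x y ≤ ε) : MeanEqPtAt R z := by
  intro ε hε
  obtain ⟨x, U, hU, hxU⟩ := hins (ε / 3) (by positivity)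
  obtain ⟨_, ⟨k, rfl⟩, hkU⟩ := hz.exists_mem_open isOpen_interior
    ⟨x, mem_interior_iff_mem_nhds.2 hU⟩
  obtain ⟨η, hη, hball⟩ := Metric.mem_nhds_iff.1 <|
    (hR.iterate k).continuousAt.preimage_mem_nhds (isOpen_interior.mem_nhds hkU)
  refine ⟨η, hη, fun y hy => ?_⟩
  have hyU : R^[k] y ∈ U := interior_subset (hball (mem_ball'.2 hy))
  have hzx : meanDist R (R^[k] z) x ≤ ε / 3 :=
    meanDist_comm R x _ ▸ hxU _ (interior_subset hkU)
  calc meanDist R z y ≤ meanDist R (R^[k] z) (R^[k] y) := meanDist_le_meanDist_iterate R z y k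
    _ ≤ meanDist R (R^[k] z) x + meanDist R x (R^[k] y) := meanDist_triangle R _ _ _
    _ ≤ ε / 3 + ε / 3 := add_le_add hzx (hxU _ hyU)
    _ < ε := by linarith

end Dichotomy

theorem transitive_dichotomy_almost_meanEq_or_meanSensitive
    {X : Type*} [MetricSpace X] [CompactSpace X] (T : X → X) (hT : Continuous T)
    (htrans : ∃ x : X, Dense (Set.range fun n : ℕ => T^[n] x)) :
    Xor' (∃ x : X, MeanEqPtAt T x)
      (∃ δ > 0, ∀ x : X, ∀ U ∈ nhds x, ∃ y ∈ U,
        δ < Filter.limsup (avgDist T x y) Filter.atTop) := by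
  obtain ⟨z, hz⟩ := htrans
  by_cases hsens : ∃ δ > 0, ∀ x : X, ∀ U ∈ nhds x, ∃ y ∈ U,
      δ < Filter.limsup (avgDist T x y) Filter.atTop
  · refine Or.inr ⟨hsens, fun ⟨x, hx⟩ => ?_⟩
    obtain ⟨δ, hδ, hδsens⟩ := hsens
    exact not_meanEqPtAt_of_meanSensitive T hδ hδsens x hx
  · refine Or.inl ⟨⟨z, meanEqPtAt_of_dense_orbit T hT hz fun ε hε => ?_⟩, hsens⟩
    push Not at hsens
    exact hsens ε hε
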